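/- arXiv:1711.01426 — 3 statements merged into one kernel-verified Lean document; each statement's English description precedes it below -/
import Mathlib

section
/- Assume condition (∗). Then the disjoint union X = ⋃_{i∈I} X_i is reversible if and only if ⟨X_i : i ∈ I⟩ is a reversible sequence of structures and every ℤ-sequence in I is trivial. -/
universe u v w

section Defs

variable {α : Type*} {β : Type*}

/-- `f` is a homomorphism from `⟨α, r⟩` to `⟨β, s⟩`. -/
def IsHom (r : α → α → Prop) (s : β → β → Prop) (f : α → β) : Prop :=
  ∀ x y, r x y → s (f x) (f y)

/-- A condensation is a bijective homomorphism. -/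
def IsCond (r : α → α → Prop) (s : β → β → Prop) (f : α → β) : Prop :=
  Function.Bijective f ∧ IsHom r s f

/-- A monomorphism is an injective homomorphism. -/
def IsMono (r : α → α → Prop) (s : β → β → Prop) (f : α → β) : Prop :=
  Function.Injective f ∧ IsHom r s f

/-- An isomorphism of binary structures. -/
def IsIso (r : α → α → Prop) (s : β → β → Prop) (f : α → β) : Prop :=
  Function.Bijective f ∧ ∀ x y, r x y ↔ s (f x) (f y)

/-- A binary structure is reversible iff every self-condensation is an automorphism. -/
def Reversible (r : α → α → Prop) : Prop :=
  ∀ f : α → α, IsCond r r f → IsIso r r f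

/-- A binary structure is connected iff it has exactly one component: it is nonempty and
the least equivalence relation containing `r` relates any two points. -/
def Connected (r : α → α → Prop) : Prop :=
  Nonempty α ∧ ∀ x y, Relation.EqvGen r x y

/-- The relation of the disjoint union of the structures `⟨X i, R i⟩`. -/
def unionRel {I : Type*} {X : I → Type*} (R : ∀ i, X i → X i → Prop) :
    (Σ i, X i) → (Σ i, X i) → Prop :=
  fun a b => ∃ h : a.1 = b.1, R b.1 (h ▸ a.2) b.2

end Defs

/-! Since the summands are connected, a self-condensation of the union has the form
`Sigma.map f G` with `f : I → I` and condensations `G i : X i → X (f i)`, and it is bijective iff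
its restrictions to the fibres of `f` are. If the union is reversible, a non-bijective surjection
with condensations on the fibres assembles to a condensation whose inverse would merge two
components, and shifting a `ℤ`-sequence one step along itself gives a condensation, hence an
automorphism, so consecutive terms are isomorphic. Conversely, reversibility of the sequence
forces `f` to be a bijection; then each `G i` has a condensation back, along the finite orbit of
`i` or from triviality of the `ℤ`-sequence `k ↦ f^k i`, so it is an isomorphism because `X i` is
reversible. -/

open Function Relation

section Morphisms

variable {α β γ : Type*} {r : α → α → Prop} {s : β → β → Prop} {t : γ → γ → Prop}

/-- The paper's `⟨α, r⟩ ≼_c ⟨β, s⟩`. -/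
def Condenses (r : α → α → Prop) (s : β → β → Prop) : Prop :=
  ∃ f : α → β, IsCond r s f

def Isomorphic (r : α → α → Prop) (s : β → β → Prop) : Prop :=
  ∃ f : α → β, IsIso r s f

theorem IsHom.comp {f : α → β} {g : β → γ} (hg : IsHom s t g) (hf : IsHom r s f) :
    IsHom r t (g ∘ f) :=
  fun _ _ h => hg _ _ (hf _ _ h)

theorem IsHom.eqvGen {f : α → β} (hf : IsHom r s f) {x y : α} (h : EqvGen r x y) :
    EqvGen s (f x) (f y) := by
  induction h with
  | rel a b h => exact .rel _ _ (hf a b h)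
  | refl a => exact .refl _
  | symm a b _ ih => exact .symm _ _ ih
  | trans a b c _ _ ih₁ ih₂ => exact .trans _ _ _ ih₁ ih₂

theorem IsCond.comp {f : α → β} {g : β → γ} (hg : IsCond s t g) (hf : IsCond r s f) :
    IsCond r t (g ∘ f) :=
  ⟨hg.1.comp hf.1, hg.2.comp hf.2⟩

theorem IsIso.isCond {f : α → β} (hf : IsIso r s f) : IsCond r s f :=
  ⟨hf.1, fun x y => (hf.2 x y).1⟩

theorem IsIso.comp {f : α → β} {g : β → γ} (hg : IsIso s t g) (hf : IsIso r s f) :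
    IsIso r t (g ∘ f) :=
  ⟨hg.1.comp hf.1, fun x y => (hf.2 x y).trans (hg.2 _ _)⟩

theorem IsIso.symm {f : α → β} (hf : IsIso r s f) :
    IsIso s r (Equiv.ofBijective f hf.1).symm := by
  set e := Equiv.ofBijective f hf.1
  refine ⟨e.symm.bijective, fun x y => ?_⟩
  conv_lhs => rw [← e.apply_symm_apply x, ← e.apply_symm_apply y]
  exact (hf.2 _ _).symm

theorem IsIso.eqvGen_iff {f : α → β} (hf : IsIso r s f) {x y : α} :
    EqvGen s (f x) (f y) ↔ EqvGen r x y := by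
  refine ⟨fun h => ?_, hf.isCond.2.eqvGen⟩
  simpa using hf.symm.isCond.2.eqvGen h

theorem Condenses.refl : Condenses r r :=
  ⟨id, bijective_id, fun _ _ => id⟩

theorem Condenses.trans (h₁ : Condenses r s) (h₂ : Condenses s t) : Condenses r t :=
  let ⟨f, hf⟩ := h₁
  let ⟨g, hg⟩ := h₂
  ⟨g ∘ f, hg.comp hf⟩

theorem Isomorphic.refl : Isomorphic r r :=
  ⟨id, bijective_id, fun _ _ => Iff.rfl⟩

theorem Isomorphic.symm (h : Isomorphic r s) : Isomorphic s r :=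
  let ⟨_, hf⟩ := h
  ⟨_, hf.symm⟩

theorem Isomorphic.trans (h₁ : Isomorphic r s) (h₂ : Isomorphic s t) : Isomorphic r t :=
  let ⟨f, hf⟩ := h₁
  let ⟨g, hg⟩ := h₂
  ⟨g ∘ f, hg.comp hf⟩

theorem Isomorphic.condenses (h : Isomorphic r s) : Condenses r s :=
  let ⟨f, hf⟩ := h
  ⟨f, hf.isCond⟩

/-- Composing with the way back gives a self-condensation, hence an automorphism. -/
theorem Reversible.isIso_of_condenses (hr : Reversible r) {f : α → β} (hf : IsCond r s f)
    (hback : Condenses s r) : IsIso r s f := by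
  obtain ⟨g, hg⟩ := hback
  have hgf := hr (g ∘ f) (hg.comp hf)
  exact ⟨hf.1, fun x y => ⟨hf.2 x y, fun h => (hgf.2 x y).2 (hg.2 _ _ h)⟩⟩

end Morphisms

section DisjointUnion

variable {I J : Type*} {X : I → Type*} {Y : J → Type*}
  {R : ∀ i, X i → X i → Prop} {S : ∀ j, Y j → Y j → Prop}

@[simp]
theorem unionRel_mk {i : I} {x y : X i} : unionRel R ⟨i, x⟩ ⟨i, y⟩ ↔ R i x y :=
  ⟨fun ⟨_, h⟩ => h, fun h => ⟨rfl, h⟩⟩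

theorem fst_eq_of_eqvGen_unionRel {a b : Σ i, X i} (h : EqvGen (unionRel R) a b) :
    a.1 = b.1 := by
  induction h with
  | rel _ _ h => exact h.1
  | refl => rfl
  | symm _ _ _ ih => exact ih.symm
  | trans _ _ _ _ _ ih₁ ih₂ => exact ih₁.trans ih₂

theorem eqvGen_unionRel_mk (hconn : ∀ i, Connected (R i)) (i : I) (x y : X i) :
    EqvGen (unionRel R) ⟨i, x⟩ ⟨i, y⟩ :=
  IsHom.eqvGen (f := Sigma.mk i) (fun _ _ => unionRel_mk.2) ((hconn i).2 x y)

theorem eqvGen_unionRel_iff (hconn : ∀ i, Connected (R i)) {a b : Σ i, X i} :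
    EqvGen (unionRel R) a b ↔ a.1 = b.1 := by
  refine ⟨fst_eq_of_eqvGen_unionRel, fun h => ?_⟩
  obtain ⟨i, x⟩ := a
  obtain ⟨j, y⟩ := b
  cases h
  exact eqvGen_unionRel_mk hconn i x y

theorem exists_eq_sigmaMap_of_isHom (hconn : ∀ i, Connected (R i))
    {F : (Σ i, X i) → Σ j, Y j} (hF : IsHom (unionRel R) (unionRel S) F) :
    ∃ (f : I → J) (G : ∀ i, X i → Y (f i)), F = Sigma.map f G := by
  set f : I → J := fun i => (F ⟨i, (hconn i).1.some⟩).1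
  have hfst : ∀ i x, (F ⟨i, x⟩).1 = f i := fun i x =>
    fst_eq_of_eqvGen_unionRel (hF.eqvGen (eqvGen_unionRel_mk hconn i x _))
  have hG : ∀ i x, ∃ y : Y (f i), F ⟨i, x⟩ = ⟨f i, y⟩ := by
    intro i x
    have := hfst i x
    revert this
    rcases F ⟨i, x⟩ with ⟨j, y⟩
    rintro rfl
    exact ⟨y, rfl⟩
  choose G hG using hG
  exact ⟨f, G, funext fun ⟨i, x⟩ => hG i x⟩

end DisjointUnion

def sigmaFibersEquiv {I J : Type*} (f : I → J) (X : I → Type*) :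
    (Σ j, Σ i : {i // f i = j}, X i.1) ≃ Σ i, X i where
  toFun p := ⟨p.2.1.1, p.2.2⟩
  invFun a := ⟨f a.1, ⟨a.1, rfl⟩, a.2⟩
  left_inv := by rintro ⟨_, ⟨i, rfl⟩, x⟩; rfl
  right_inv _ := rfl

section SigmaMap

variable {I J : Type*} {X : I → Type*} {Y : J → Type*}
  {R : ∀ i, X i → X i → Prop} {S : ∀ j, Y j → Y j → Prop} {f : I → J} {G : ∀ i, X i → Y (f i)}

theorem isHom_sigmaMap_iff :
    IsHom (unionRel R) (unionRel S) (Sigma.map f G) ↔ ∀ i, IsHom (R i) (S (f i)) (G i) := by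
  refine ⟨fun h i x y hxy => unionRel_mk.1 (h ⟨i, x⟩ ⟨i, y⟩ (unionRel_mk.2 hxy)), ?_⟩
  rintro hG ⟨i, x⟩ ⟨j, y⟩ ⟨hij, hxy⟩
  cases hij
  exact unionRel_mk.2 (hG i x y hxy)

theorem Function.Surjective.of_sigma_map (h : Surjective (Sigma.map f G)) (hf : Injective f)
    (i : I) : Surjective (G i) := by
  intro y
  obtain ⟨⟨i', x⟩, hx⟩ := h ⟨f i, y⟩
  obtain ⟨hi, hxy⟩ := Sigma.mk.inj_iff.1 hx
  cases hf hi
  exact ⟨x, eq_of_heq hxy⟩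

theorem Function.Surjective.fst_of_sigma_map (h : Surjective (Sigma.map f G))
    (hY : ∀ j, Nonempty (Y j)) : Surjective f := by
  intro j
  obtain ⟨⟨i, x⟩, hx⟩ := h ⟨j, (hY j).some⟩
  exact ⟨i, congrArg Sigma.fst hx⟩

theorem bijective_sigmaMap_iff (hf : Bijective f) :
    Bijective (Sigma.map f G) ↔ ∀ i, Bijective (G i) :=
  ⟨fun h i => ⟨h.1.of_sigma_map i, h.2.of_sigma_map hf.1 i⟩,
    fun hG => ⟨hf.1.sigma_map fun i => (hG i).1, hf.2.sigma_map fun i => (hG i).2⟩⟩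

theorem isIso_sigmaMap_iff (hf : Bijective f) :
    IsIso (unionRel R) (unionRel S) (Sigma.map f G) ↔ ∀ i, IsIso (R i) (S (f i)) (G i) := by
  refine ⟨fun h i => ⟨(bijective_sigmaMap_iff hf).1 h.1 i, fun x y => ?_⟩, fun hG => ?_⟩
  · simpa only [Sigma.map_mk, unionRel_mk] using h.2 ⟨i, x⟩ ⟨i, y⟩
  refine ⟨(bijective_sigmaMap_iff hf).2 fun i => (hG i).1, ?_⟩
  rintro ⟨i, x⟩ ⟨j, y⟩
  by_cases hij : i = j
  · cases hij
    simpa only [Sigma.map_mk, unionRel_mk] using (hG i).2 x y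
  · simp only [Sigma.map_mk]
    exact iff_of_false (fun h => hij h.1) fun h => hij (hf.1 h.1)

variable (f G) in
/-- The restriction of `Sigma.map f G` to the union of the summands over the fibre of `j`. -/
def fiberMap (j : J) : (Σ i : {i // f i = j}, X i.1) → Y j :=
  fun p => p.1.2 ▸ G p.1.1 p.2

theorem sigmaMap_id_fiberMap :
    Sigma.map id (fiberMap f G) = Sigma.map f G ∘ sigmaFibersEquiv f X := by
  funext ⟨_, ⟨i, rfl⟩, x⟩
  rfl

theorem bijective_sigmaMap_iff_fiberMap :
    Bijective (Sigma.map f G) ↔ ∀ j, Bijective (fiberMap f G j) := by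
  rw [← bijective_sigmaMap_iff bijective_id, sigmaMap_id_fiberMap, Equiv.bijective_comp]

theorem isHom_fiberMap (hG : ∀ i, IsHom (R i) (S (f i)) (G i)) (j : J) :
    IsHom (unionRel fun i : {i // f i = j} => R i.1) (S j) (fiberMap f G j) := by
  rintro ⟨⟨i, rfl⟩, x⟩ ⟨_, y⟩ ⟨hij, hxy⟩
  cases hij
  exact hG i x y hxy

end SigmaMap

section Reversibility

variable {I : Type*} {X : I → Type*} {R : ∀ i, X i → X i → Prop}

variable (R) in
/-- `⟨X i : i ∈ I⟩` is a reversible sequence of structures. -/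
def IsReversibleSeq : Prop :=
  ¬ ∃ f : I → I, Surjective f ∧ ¬ Bijective f ∧
    ∀ j, Condenses (unionRel fun i : {i // f i = j} => R i.1) (R j)

variable (R) in
/-- Every `ℤ`-sequence in `I` is trivial. -/
def ZSeqsTrivial : Prop :=
  ∀ g : ℤ → I, Injective g → (∀ k l, k < l → Condenses (R (g k)) (R (g l))) →
    ∀ k l, Isomorphic (R (g k)) (R (g l))

theorem isomorphic_of_le_of_succ {g : ℤ → I} (h : ∀ k, Isomorphic (R (g k)) (R (g (k + 1))))
    {a b : ℤ} (hab : a ≤ b) : Isomorphic (R (g a)) (R (g b)) := by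
  induction b, hab using Int.leInduction with
  | base => exact .refl
  | succ b _ ih => exact ih.trans (h b)

theorem condenses_zpow_of_le {e : Equiv.Perm I} (he : ∀ i, Condenses (R i) (R (e i))) (i : I)
    {a b : ℤ} (hab : a ≤ b) : Condenses (R ((e ^ a) i)) (R ((e ^ b) i)) := by
  induction b, hab using Int.leInduction with
  | base => exact .refl
  | succ b _ ih =>
    rw [add_comm, zpow_add, zpow_one, Equiv.Perm.mul_apply]
    exact ih.trans (he _)

theorem isReversibleSeq_of_reversible (hconn : ∀ i, Connected (R i))
    (hX : Reversible (unionRel R)) : IsReversibleSeq R := by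
  rintro ⟨f, hsurj, hnbij, hfib⟩
  choose F hF using hfib
  set G : ∀ i, X i → X (f i) := fun i x => F (f i) ⟨⟨i, rfl⟩, x⟩
  have hFG : fiberMap f G = F := by
    funext j ⟨⟨i, hi⟩, x⟩
    subst hi
    rfl
  have hG : ∀ i, IsHom (R i) (R (f i)) (G i) := fun i x y hxy =>
    (hF (f i)).2 ⟨⟨i, rfl⟩, x⟩ ⟨⟨i, rfl⟩, y⟩ (unionRel_mk.2 hxy)
  have hiso : IsIso (unionRel R) (unionRel R) (Sigma.map f G) :=
    hX _ ⟨bijective_sigmaMap_iff_fiberMap.2 (hFG ▸ fun j => (hF j).1), isHom_sigmaMap_iff.2 hG⟩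
  obtain ⟨i, i', hii', hne⟩ := not_injective_iff.1 fun hinj => hnbij ⟨hinj, hsurj⟩
  -- `X i` and `X i'` both land in the component `X (f i)`, so by `hiso` they lie in one component
  have hcomp : EqvGen (unionRel R)
      (Sigma.map f G ⟨i, (hconn i).1.some⟩) (Sigma.map f G ⟨i', (hconn i').1.some⟩) :=
    (eqvGen_unionRel_iff hconn).2 hii'
  exact hne ((eqvGen_unionRel_iff hconn).1 (hiso.eqvGen_iff.1 hcomp))

theorem zSeqsTrivial_of_reversible (hX : Reversible (unionRel R)) : ZSeqsTrivial R := by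
  classical
  intro g hg hcond
  -- shift the sequence one step forward and fix every summand off it
  set σ : Equiv.Perm I := (Equiv.addRight 1 : Equiv.Perm ℤ).extendDomain (Equiv.ofInjective g hg)
  have hσg : ∀ k, σ (g k) = g (k + 1) := fun k =>
    Equiv.Perm.extendDomain_apply_image _ (Equiv.ofInjective g hg) k
  have hσ : ∀ i, Condenses (R i) (R (σ i)) := by
    intro i
    by_cases hi : i ∈ Set.range g
    · obtain ⟨k, rfl⟩ := hi
      rw [hσg]
      exact hcond k (k + 1) (lt_add_one k)
    · rw [Equiv.Perm.extendDomain_apply_not_subtype _ _ hi]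
      exact .refl
  choose G hG using hσ
  have hiso := (isIso_sigmaMap_iff σ.bijective).1 <| hX _
    ⟨(bijective_sigmaMap_iff σ.bijective).2 fun i => (hG i).1,
      isHom_sigmaMap_iff.2 fun i => (hG i).2⟩
  have hstep : ∀ k, Isomorphic (R (g k)) (R (g (k + 1))) := fun k => hσg k ▸ ⟨_, hiso (g k)⟩
  intro k l
  rcases le_total k l with hkl | hlk
  · exact isomorphic_of_le_of_succ hstep hkl
  · exact (isomorphic_of_le_of_succ hstep hlk).symm

theorem condenses_symm_of_perm (hZ : ZSeqsTrivial R) {e : Equiv.Perm I}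
    (he : ∀ i, Condenses (R i) (R (e i))) (i : I) : Condenses (R (e i)) (R i) := by
  by_cases hper : ∃ n : ℤ, 0 < n ∧ (e ^ n) i = i
  · obtain ⟨n, hn, hni⟩ := hper
    have h := condenses_zpow_of_le he i (show (1 : ℤ) ≤ n from hn)
    rwa [zpow_one, hni] at h
  -- an infinite orbit is a `ℤ`-sequence, which is trivial
  have hinj : Injective fun k : ℤ => (e ^ k) i := by
    intro k l (hkl : (e ^ k) i = (e ^ l) i)
    by_contra hne
    wlog hlt : k < l generalizing k l
    · exact this hkl.symm (Ne.symm hne) (lt_of_le_of_ne (not_lt.1 hlt) (Ne.symm hne))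
    refine hper ⟨l - k, sub_pos.2 hlt, (e ^ k).injective ?_⟩
    rw [← Equiv.Perm.mul_apply, ← zpow_add, add_sub_cancel, hkl]
  have h := (hZ _ hinj (fun k l hkl => condenses_zpow_of_le he i hkl.le) 1 0).condenses
  rwa [zpow_one, zpow_zero, Equiv.Perm.one_apply] at h

theorem reversible_unionRel (hconn : ∀ i, Connected (R i)) (hrev : ∀ i, Reversible (R i))
    (hseq : IsReversibleSeq R) (hZ : ZSeqsTrivial R) : Reversible (unionRel R) := by
  intro F hF
  obtain ⟨f, G, rfl⟩ := exists_eq_sigmaMap_of_isHom hconn hF.2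
  have hG : ∀ i, IsHom (R i) (R (f i)) (G i) := isHom_sigmaMap_iff.1 hF.2
  have hf : Bijective f := by
    by_contra hnb
    exact hseq ⟨f, hF.1.2.fst_of_sigma_map fun i => (hconn i).1, hnb, fun j =>
      ⟨fiberMap f G j, bijective_sigmaMap_iff_fiberMap.1 hF.1 j, isHom_fiberMap hG j⟩⟩
  have hGc : ∀ i, IsCond (R i) (R (f i)) (G i) := fun i =>
    ⟨(bijective_sigmaMap_iff hf).1 hF.1 i, hG i⟩
  refine (isIso_sigmaMap_iff hf).2 fun i => (hrev i).isIso_of_condenses (hGc i) ?_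
  exact condenses_symm_of_perm hZ (e := Equiv.ofBijective f hf) (fun i => ⟨G i, hGc i⟩) i

end Reversibility

/-- **Theorem (Statement 0).** Under condition (∗) — the `⟨X i, R i⟩` are (pairwise disjoint,
realized by a sigma type) connected and reversible binary structures — the disjoint union
is reversible iff `⟨X i : i ∈ I⟩` is a reversible sequence of structures (its components cannot
be merged by condensations along a non-bijective surjection of the index set) and every
ℤ-sequence in `I` is trivial. -/
theorem stmt0 {I : Type u} {X : I → Type v} (R : ∀ i, X i → X i → Prop)
    (hconn : ∀ i, Connected (R i)) (hrev : ∀ i, Reversible (R i)) :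
    Reversible (unionRel R) ↔
      ((¬ ∃ f : I → I, Function.Surjective f ∧ ¬ Function.Bijective f ∧
          ∀ j : I, ∃ F : (Σ i : {i : I // f i = j}, X i.1) → X j,
            IsCond (unionRel (fun i : {i : I // f i = j} => R i.1)) (R j) F) ∧
        (∀ g : ℤ → I,
          Function.Injective g →
          (∀ k l : ℤ, k < l → ∃ F : X (g k) → X (g l), IsCond (R (g k)) (R (g l)) F) →
          ∀ k l : ℤ, ∃ F : X (g k) → X (g l), IsIso (R (g k)) (R (g l)) F)) :=
  ⟨fun hX => ⟨isReversibleSeq_of_reversible hconn hX, zSeqsTrivial_of_reversible hX⟩,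
    fun ⟨hseq, hZ⟩ => reversible_unionRel hconn hrev hseq hZ⟩
end

section
/- A binary structure with finitely many connectivity components is reversible if and only if all of its components are reversible. -/
/-!
A condensation `g` of a component extends by the identity to a condensation of the whole
structure, so reversibility passes to components. Conversely, a condensation `f` of the whole
structure permutes its components; as there are finitely many, some iterate `f^[k]`, `k > 0`,
maps every component onto itself and so restricts to a condensation, hence an automorphism, of
each component. If `ρ (f y) (f z)`, then `y` and `z` lie in one component and
`ρ (f^[k] y) (f^[k] z)`, so `ρ y z`.
-/

universe u v w

open Relation Function

section Structures

variable {α : Type*} {β : Type*} {ρ : α → α → Prop} {σ : β → β → Prop}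

theorem IsHom.iterate {f : α → α} (hf : IsHom ρ ρ f) (n : ℕ) : IsHom ρ ρ f^[n] := by
  induction n with
  | zero => exact fun _ _ h => h
  | succ n ih => exact fun a b h => ih _ _ (hf a b h)

theorem IsHom.eqvGen_s3 {f : α → β} (hf : IsHom ρ σ f) {a b : α} (h : EqvGen ρ a b) :
    EqvGen σ (f a) (f b) := by
  induction h with
  | rel a b h => exact .rel _ _ (hf a b h)
  | refl a => exact .refl _
  | symm a b _ ih => exact .symm _ _ ih
  | trans a b c _ _ ih₁ ih₂ => exact .trans _ _ _ ih₁ ih₂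

theorem IsCond.iterate {f : α → α} (hf : IsCond ρ ρ f) (n : ℕ) : IsCond ρ ρ f^[n] :=
  ⟨hf.1.iterate n, hf.2.iterate n⟩

theorem IsCond.subtypeMap {f : α → α} (hf : IsCond ρ ρ f) {p : α → Prop}
    (hp : ∀ a, p (f a) ↔ p a) :
    IsCond (fun a b : Subtype p => ρ a b) (fun a b : Subtype p => ρ a b)
      (Subtype.map f fun a => (hp a).2) := by
  refine ⟨⟨fun a b hab => Subtype.ext (hf.1.1 (congrArg Subtype.val hab)), fun b => ?_⟩,
    fun a b h => hf.2 a b h⟩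
  obtain ⟨a, ha⟩ := hf.1.2 b.1
  exact ⟨⟨a, (hp a).1 (ha ▸ b.2)⟩, Subtype.ext ha⟩

theorem Reversible.subtype (h : Reversible ρ) {p : α → Prop}
    (hp : ∀ a b, ρ a b → (p a ↔ p b)) : Reversible (fun a b : Subtype p => ρ a b) := by
  classical
  intro g hg
  let f : Equiv.Perm α := Equiv.Perm.ofSubtype (Equiv.ofBijective g hg.1)
  have hfg : ∀ a : Subtype p, f a = g a := fun a => Equiv.Perm.ofSubtype_apply_coe _ a
  have hf : IsHom ρ ρ f := by
    intro a b hab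
    by_cases ha : p a
    · have hb : p b := (hp a b hab).1 ha
      simpa only [hfg ⟨a, ha⟩, hfg ⟨b, hb⟩] using hg.2 ⟨a, ha⟩ ⟨b, hb⟩ hab
    · have hb : ¬ p b := fun hb => ha ((hp a b hab).2 hb)
      rwa [Equiv.Perm.ofSubtype_apply_of_not_mem _ ha,
        Equiv.Perm.ofSubtype_apply_of_not_mem _ hb]
  refine ⟨hg.1, fun a b => ⟨hg.2 a b, fun hab => ?_⟩⟩
  refine ((h f ⟨f.bijective, hf⟩).2 a b).2 ?_
  rwa [hfg a, hfg b]

end Structures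

section Components

variable {α : Type*} {ρ : α → α → Prop}

theorem Relation.EqvGen.iff_of_rel {x a b : α} (h : ρ a b) : EqvGen ρ x a ↔ EqvGen ρ x b :=
  ⟨fun ha => ha.trans _ _ _ (.rel _ _ h), fun hb => hb.trans _ _ _ (.symm _ _ (.rel _ _ h))⟩

theorem Quot.mk_eqvGen_eq_iff {a b : α} :
    Quot.mk (EqvGen ρ) a = Quot.mk (EqvGen ρ) b ↔ EqvGen ρ a b :=
  Quot.eq.trans (EqvGen.is_equivalence ρ).eqvGen_iff

theorem IsCond.exists_iterate_eqvGen [Finite (Quot (EqvGen ρ))] {f : α → α}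
    (hf : IsCond ρ ρ f) : ∃ k, 0 < k ∧ ∀ y, EqvGen ρ y (f^[k] y) := by
  let F : Quot (EqvGen ρ) → Quot (EqvGen ρ) := Quot.map f fun _ _ => hf.2.eqvGen_s3
  have hF : Semiconj (Quot.mk _) f F := fun _ => rfl
  have hFsurj : Surjective F :=
    Surjective.of_comp (g := Quot.mk _) (Quot.mk_surjective.comp hf.1.2)
  let e : Equiv.Perm (Quot (EqvGen ρ)) :=
    Equiv.ofBijective F ⟨Finite.injective_iff_surjective.2 hFsurj, hFsurj⟩
  refine ⟨orderOf e, orderOf_pos e, fun y => Quot.mk_eqvGen_eq_iff.1 ?_⟩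
  have hek : F^[orderOf e] = id := by
    have h := congrArg DFunLike.coe (pow_orderOf_eq_one e)
    rwa [Equiv.Perm.coe_pow] at h
  rw [(hF.iterate_right _) y, hek, id]

theorem IsCond.isIso_of_iterate_eqvGen
    (hcomp : ∀ x, Reversible fun a b : {y // EqvGen ρ x y} => ρ a.1 b.1)
    {f : α → α} (hf : IsCond ρ ρ f) {k : ℕ} (hk : 0 < k) (hfix : ∀ y, EqvGen ρ y (f^[k] y)) :
    IsIso ρ ρ f := by
  obtain ⟨m, rfl⟩ : ∃ m, k = m + 1 := ⟨k - 1, by omega⟩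
  refine ⟨hf.1, fun y z => ⟨hf.2 y z, fun hfyz => ?_⟩⟩
  have hyz : EqvGen ρ y z := by
    have h : EqvGen ρ (f^[m + 1] y) (f^[m + 1] z) :=
      (hf.2.iterate m).eqvGen_s3 (.rel _ _ hfyz)
    exact (hfix y).trans _ _ _ (h.trans _ _ _ (.symm _ _ (hfix z)))
  have hinv : ∀ a, EqvGen ρ y (f^[m + 1] a) ↔ EqvGen ρ y a := fun a =>
    ⟨fun h => h.trans _ _ _ (.symm _ _ (hfix a)), fun h => h.trans _ _ _ (hfix a)⟩
  have hiso := hcomp y _ ((hf.iterate (m + 1)).subtypeMap hinv)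
  exact (hiso.2 ⟨y, .refl _⟩ ⟨z, hyz⟩).2 (hf.2.iterate m _ _ hfyz)

end Components

/-- **Theorem (Statement 3).** A binary structure `⟨α, ρ⟩` with finitely many connectivity
components (the equivalence classes of the least equivalence relation containing `ρ`) is
reversible iff every component — the class of a point `x`, with the restricted relation —
is reversible. -/
theorem stmt3 {α : Type u} (ρ : α → α → Prop)
    (hfin : Finite (Quot (Relation.EqvGen ρ))) :
    Reversible ρ ↔
      ∀ x : α,
        Reversible (fun a b : {y : α // Relation.EqvGen ρ x y} => ρ a.1 b.1) := by
  refine ⟨fun h x => h.subtype fun a b hab => EqvGen.iff_of_rel hab, fun hcomp f hf => ?_⟩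
  obtain ⟨k, hk, hfix⟩ := hf.exists_iterate_eqvGen
  exact hf.isIso_of_iterate_eqvGen hcomp hk hfix
end

section
/- Assume condition (∗) and that all the structures X_i, i ∈ I, are finite. Then the following are equivalent: (a) the sequence ⟨|X_i| : i ∈ I⟩ is finite-to-one (there is no infinite J ⊆ I with |X_i| = |X_j| for all i, j ∈ J); (b) there exist a well-founded relation ⟨A, R⟩ and a function θ : {X_i : i ∈ I} → A monotone with respect to monomorphisms such that for each a in the range of θ there is no ω*-sequence in I^θ_a. -/
universe u v w

/-!
(a) ⇒ (b): take `θ i = |X i|` in `ℕ`; a monomorphism cannot decrease the size, and an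
ω*-sequence inside one fibre of `θ` would be infinitely many components of the same size.

(b) ⇒ (a): there are only finitely many binary relations on a finite set, so among infinitely many
components of the same size there are infinitely many pairwise isomorphic ones. Mutually
embeddable components get the same `θ`-value, since a well-founded relation is asymmetric, and any
enumeration of these components is then an ω*-sequence in a single fibre of `θ`.
-/

section BinaryStructure

variable {α β : Type*} {r : α → α → Prop} {s : β → β → Prop}

theorem IsMono.natCard_le [Finite β] {f : α → β} (hf : IsMono r s f) :
    Nat.card α ≤ Nat.card β :=
  Nat.card_le_card_of_injective f hf.1

theorem RelIso.isMono (e : r ≃r s) : IsMono r s e :=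
  ⟨e.injective, fun _ _ => e.map_rel_iff.2⟩

end BinaryStructure

theorem WellFounded.eq_of_eq_or_rel_of_eq_or_rel {A : Type*} {W : A → A → Prop}
    (hW : WellFounded W) {a b : A} (hab : a = b ∨ W a b) (hba : b = a ∨ W b a) : a = b := by
  rcases hab with hab | hab
  · exact hab
  rcases hba with hba | hba
  · exact hba.symm
  exact absurd hba (hW.asymmetric a b hab)

theorem exists_injective_nat_relIso {I : Type*} {X : I → Type*} (R : ∀ i, X i → X i → Prop)
    {β : Type*} [Finite β] {J : Set I} (hJ : J.Infinite) (hβ : ∀ j ∈ J, Nonempty (X j ≃ β)) :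
    ∃ g : ℕ → I, Function.Injective g ∧ ∀ k l, Nonempty (R (g k) ≃r R (g l)) := by
  let E : ∀ j : J, X j ≃ β := fun j => (hβ j j.2).some
  let transported : J → β → β → Prop := fun j => (E j).symm ⁻¹'o R j
  have : Infinite J := hJ.to_subtype
  obtain ⟨y, hy⟩ := Finite.exists_infinite_fiber transported
  let g₀ : ℕ ↪ transported ⁻¹' {y} := Infinite.natEmbedding _
  refine ⟨fun k => (g₀ k : J), fun k l h => g₀.injective (Subtype.ext (Subtype.ext h)),
    fun k l => ⟨?_⟩⟩
  have hkl : transported (g₀ k) = transported (g₀ l) := (g₀ k).2.trans (g₀ l).2.symm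
  exact (RelIso.preimage (E (g₀ k)).symm _).symm.trans
    ((hkl ▸ RelIso.refl _ : transported (g₀ k) ≃r transported (g₀ l)).trans
      (RelIso.preimage (E (g₀ l)).symm _))

theorem stmt10_general {I : Type u} {X : I → Type v} (R : ∀ i, X i → X i → Prop)
    (hfin : ∀ i, Finite (X i)) :
    (¬ ∃ J : Set I, J.Infinite ∧
        ∀ i ∈ J, ∀ j ∈ J, Cardinal.mk (X i) = Cardinal.mk (X j)) ↔
      (∃ (A : Type w) (W : A → A → Prop) (θ : I → A),
        (∀ S : Set A, S.Nonempty → ∃ a ∈ S, ∀ b ∈ S, ¬ W b a) ∧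
        (∀ i j : I, (∃ F : X i → X j, IsMono (R i) (R j) F) → θ i = θ j ∨ W (θ i) (θ j)) ∧
        (∀ a ∈ Set.range θ, ¬ ∃ g : ℕ → I,
          Function.Injective g ∧ (∀ k, θ (g k) = a) ∧
          ∀ k l : ℕ, k < l → ∃ F : X (g l) → X (g k), IsMono (R (g l)) (R (g k)) F)) := by
  constructor
  · intro hfinToOne
    refine ⟨ULift.{w} ℕ, fun a b => a.down < b.down, fun i => ⟨Nat.card (X i)⟩,
      (InvImage.wf ULift.down wellFounded_lt).has_min, ?_, ?_⟩
    · rintro i j ⟨F, hF⟩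
      have := hfin j
      exact (hF.natCard_le.eq_or_lt).imp (congrArg ULift.up) id
    · rintro a - ⟨g, hg, hθ, -⟩
      refine hfinToOne ⟨Set.range g, Set.infinite_range_of_injective hg, ?_⟩
      rintro _ ⟨k, rfl⟩ _ ⟨l, rfl⟩
      have := hfin (g k)
      have := hfin (g l)
      rw [← Nat.cast_card, ← Nat.cast_card]
      exact congrArg (Nat.cast ∘ ULift.down) ((hθ k).trans (hθ l).symm)
  · rintro ⟨A, W, θ, hW, hmono, hnoSeq⟩ ⟨J, hJ, hcard⟩
    obtain ⟨i₀, hi₀⟩ := hJ.nonempty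
    have := hfin i₀
    obtain ⟨g, hg, hiso⟩ :=
      exists_injective_nat_relIso R hJ fun j hj => Cardinal.eq.1 (hcard j hj i₀ hi₀)
    have hθ : ∀ k, θ (g k) = θ (g 0) := fun k =>
      (WellFounded.wellFounded_iff_has_min.2 hW).eq_of_eq_or_rel_of_eq_or_rel
        (hmono _ _ ⟨_, (hiso k 0).some.isMono⟩) (hmono _ _ ⟨_, (hiso 0 k).some.isMono⟩)
    exact hnoSeq _ ⟨g 0, rfl⟩ ⟨g, hg, hθ, fun k l _ => ⟨_, (hiso l k).some.isMono⟩⟩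

/-- **Proposition (Statement 10).** Assume condition (∗) — `⟨X i, R i⟩`, `i ∈ I`, pairwise
disjoint (realized by a sigma type), connected and reversible binary structures — and that all
the `X i` are finite. Then the following are equivalent: (a) the sequence `⟨|X i| : i ∈ I⟩` is
finite-to-one; (b) there are a well-founded relation `⟨A, W⟩` and a function `θ` on the
components, monotone with respect to monomorphisms, such that for each `a` in the range of `θ`
there is no ω*-sequence in `I^θ_a = {i : θ i = a}`. -/
theorem stmt10 {I : Type u} {X : I → Type v} (R : ∀ i, X i → X i → Prop)
    (hconn : ∀ i, Connected (R i)) (hrev : ∀ i, Reversible (R i))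
    (hfin : ∀ i, Finite (X i)) :
    (¬ ∃ J : Set I, J.Infinite ∧
        ∀ i ∈ J, ∀ j ∈ J, Cardinal.mk (X i) = Cardinal.mk (X j)) ↔
      (∃ (A : Type w) (W : A → A → Prop) (θ : I → A),
        (∀ S : Set A, S.Nonempty → ∃ a ∈ S, ∀ b ∈ S, ¬ W b a) ∧
        (∀ i j : I, (∃ F : X i → X j, IsMono (R i) (R j) F) → θ i = θ j ∨ W (θ i) (θ j)) ∧
        (∀ a ∈ Set.range θ, ¬ ∃ g : ℕ → I,
          Function.Injective g ∧ (∀ k, θ (g k) = a) ∧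
          ∀ k l : ℕ, k < l → ∃ F : X (g l) → X (g k), IsMono (R (g l)) (R (g k)) F)) :=
  stmt10_general R hfin
end
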